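/- Let P be an n×n row-stochastic matrix, α ∈ (0,1), K ⊆ {1,…,n}, U the indicator of the complement of K, P̃(i,j) = U(i)P(i,j), and s with U(s)=1. Define π_v = α·e_vᵀ(I − (1−α)P)⁻¹ for all v, π̃_s = α·e_sᵀ(I − (1−α)(P̃ + e_K e_sᵀ))⁻¹, and β_s(k) = π̃_s(k)/(α + (1−α)π̃_s(K)) for k ∈ K. If the linear-combination identity π_s(v) = (α·U(v)·π̃_s(v) + ∑_{k∈K} π̃_s(k)π_k(v)) / (α + (1−α)π̃_s(K)) holds for all v, then ‖π_s − (α e_sᵀ + ∑_{k∈K} β_s(k)π_k)‖₁ = α·(π̃_s(complement of K)/(α + (1−α)π̃_s(K)) − 1). -/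

import Mathlib

/-!
The vector `π̃_s` is the personalized PageRank of the row-stochastic chain `P̃ + e_K e_sᵀ`, so the
Neumann series shows it is nonnegative, and its fixed-point equation
`π̃_s = α e_s + (1 - α) π̃_s (P̃ + e_K e_sᵀ)` read at `s` gives `π̃_s(s) ≥ α + (1 - α) π̃_s(K)`,
every node of `K` sending all its mass to `s`. By the hub identity, the error at `w` is
`α U(w) π̃_s(w) / (α + (1 - α) π̃_s(K)) - α e_s(w)`, which is therefore nonnegative everywhere;
the absolute values drop and the sum is evaluated directly.
-/

open Matrix

namespace Matrix

variable {n : Type*} [Fintype n] [DecidableEq n]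

section LinftyOpNorm

attribute [local instance] Matrix.linftyOpNormedRing Matrix.linftyOpNormedAlgebra

lemma linfty_opNorm_le_one_of_mem_rowStochastic {M : Matrix n n ℝ}
    (hM : M ∈ rowStochastic ℝ n) : ‖M‖ ≤ 1 := by
  rw [← coe_nnnorm, NNReal.coe_le_one, linfty_opNNNorm_def]
  refine Finset.sup_le fun i _ => ?_
  rw [← NNReal.coe_le_coe, NNReal.coe_sum]
  simp_rw [coe_nnnorm, Real.norm_of_nonneg (hM.1 i _), sum_row_of_mem_rowStochastic hM i]
  simp

lemma norm_smul_lt_one_of_mem_rowStochastic {M : Matrix n n ℝ} (hM : M ∈ rowStochastic ℝ n)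
    {c : ℝ} (hc0 : 0 ≤ c) (hc1 : c < 1) : ‖c • M‖ < 1 := by
  rw [norm_smul, Real.norm_of_nonneg hc0]
  nlinarith [linfty_opNorm_le_one_of_mem_rowStochastic hM, norm_nonneg M]

lemma isUnit_det_one_sub_smul_of_mem_rowStochastic {M : Matrix n n ℝ}
    (hM : M ∈ rowStochastic ℝ n) {c : ℝ} (hc0 : 0 ≤ c) (hc1 : c < 1) :
    IsUnit (1 - c • M).det :=
  (isUnit_iff_isUnit_det _).mp
    (isUnit_one_sub_of_norm_lt_one (norm_smul_lt_one_of_mem_rowStochastic hM hc0 hc1))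

-- The Neumann series `∑ cᵏ Mᵏ` of `(1 - c • M)⁻¹` has nonnegative terms.
lemma inv_one_sub_smul_apply_nonneg {M : Matrix n n ℝ} (hM : M ∈ rowStochastic ℝ n)
    {c : ℝ} (hc0 : 0 ≤ c) (hc1 : c < 1) (i j : n) : 0 ≤ (1 - c • M)⁻¹ i j := by
  have hsum := hasSum_geom_series_inverse _ (norm_smul_lt_one_of_mem_rowStochastic hM hc0 hc1)
  rw [← nonsing_inv_eq_ringInverse] at hsum
  refine (Pi.hasSum.mp (Pi.hasSum.mp hsum i) j).nonneg fun k => ?_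
  rw [smul_pow, smul_apply, smul_eq_mul]
  exact mul_nonneg (pow_nonneg hc0 k) (pow_mem hM k |>.1 i j)

end LinftyOpNorm

end Matrix

section PersonalizedPageRank

variable {n : Type*} [Fintype n] [DecidableEq n]

noncomputable def personalizedPageRank (α : ℝ) (M : Matrix n n ℝ) (v : n → ℝ) : n → ℝ :=
  α • (v ᵥ* (1 - (1 - α) • M)⁻¹)

variable {α : ℝ} {M : Matrix n n ℝ} {v : n → ℝ}

lemma personalizedPageRank_nonneg (hM : M ∈ rowStochastic ℝ n) (hα0 : 0 < α) (hα1 : α ≤ 1)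
    (hv : 0 ≤ v) (w : n) : 0 ≤ personalizedPageRank α M v w :=
  mul_nonneg hα0.le <| Finset.sum_nonneg fun i _ =>
    mul_nonneg (hv i) (inv_one_sub_smul_apply_nonneg hM (by linarith) (by linarith) i w)

lemma personalizedPageRank_eq_add_vecMul (hM : M ∈ rowStochastic ℝ n) (hα0 : 0 < α)
    (hα1 : α ≤ 1) :
    personalizedPageRank α M v = α • v + (1 - α) • (personalizedPageRank α M v ᵥ* M) := by
  have hdet := isUnit_det_one_sub_smul_of_mem_rowStochastic hM (c := 1 - α) (by linarith)
    (by linarith)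
  have hfix : personalizedPageRank α M v ᵥ* (1 - (1 - α) • M) = α • v := by
    rw [personalizedPageRank, smul_vecMul, vecMul_vecMul, nonsing_inv_mul _ hdet, vecMul_one]
  rw [vecMul_sub, vecMul_one, vecMul_smul] at hfix
  rw [← hfix]
  abel

lemma le_personalizedPageRank_apply (hM : M ∈ rowStochastic ℝ n) (hα0 : 0 < α) (hα1 : α ≤ 1)
    (hv : 0 ≤ v) {K : Finset n} {s : n} (hKs : ∀ k ∈ K, M k s = 1) :
    α * v s + (1 - α) * ∑ k ∈ K, personalizedPageRank α M v k ≤ personalizedPageRank α M v s := by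
  have hx0 := personalizedPageRank_nonneg hM hα0 hα1 hv
  have hs := congrFun (personalizedPageRank_eq_add_vecMul (v := v) hM hα0 hα1) s
  simp only [Pi.add_apply, Pi.smul_apply, smul_eq_mul] at hs
  set x := personalizedPageRank α M v
  have hK : ∑ k ∈ K, x k ≤ (x ᵥ* M) s :=
    calc ∑ k ∈ K, x k = ∑ k ∈ K, x k * M k s :=
          Finset.sum_congr rfl fun k hk => by rw [hKs k hk, mul_one]
      _ ≤ ∑ i, x i * M i s :=
          Finset.sum_le_sum_of_subset_of_nonneg K.subset_univ fun i _ _ =>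
            mul_nonneg (hx0 i) (hM.1 i s)
  rw [hs]
  gcongr

end PersonalizedPageRank

namespace Matrix

variable {n : Type*} [DecidableEq n]

/-- The paper's `P̃ + e_K e_sᵀ`: the chain `P` in which every node of `K` jumps back to `s`. -/
def redirectRows (P : Matrix n n ℝ) (K : Finset n) (s : n) : Matrix n n ℝ :=
  of fun i j => if i ∈ K then (Pi.single s 1 : n → ℝ) j else P i j

lemma redirectRows_mem_rowStochastic [Fintype n] {P : Matrix n n ℝ} (hP : P ∈ rowStochastic ℝ n)
    (K : Finset n) (s : n) : redirectRows P K s ∈ rowStochastic ℝ n := by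
  refine mem_rowStochastic_iff_sum.mpr ⟨fun i j => ?_, fun i => ?_⟩
  · by_cases hi : i ∈ K
    · have hsingle : (0 : n → ℝ) ≤ Pi.single s 1 := Pi.single_nonneg.mpr zero_le_one
      simpa [redirectRows, hi] using hsingle j
    · simpa [redirectRows, hi] using hP.1 i j
  · by_cases hi : i ∈ K
    · simp [redirectRows, hi]
    · simpa [redirectRows, hi] using sum_row_of_mem_rowStochastic hP i

lemma redirectRows_apply_of_mem (P : Matrix n n ℝ) {K : Finset n} (s : n) {k : n} (hk : k ∈ K) :
    redirectRows P K s k s = 1 := by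
  simp [redirectRows, hk]

end Matrix

lemma sum_abs_hub_error {n : Type*} [Fintype n] [DecidableEq n] {K : Finset n} {s : n}
    (hs : s ∉ K) {α D : ℝ} (hα : 0 ≤ α) (hD : 0 < D) {x : n → ℝ} (hx : ∀ w, 0 ≤ x w)
    (hxs : D ≤ x s) :
    ∑ w, |α * (if w ∈ K then 0 else 1) * x w / D - α * (Pi.single s 1 : n → ℝ) w| =
      α * ((∑ w ∈ Kᶜ, x w) / D - 1) := by
  have hterm :
      ∀ w, 0 ≤ α * (if w ∈ K then 0 else 1) * x w / D - α * (Pi.single s 1 : n → ℝ) w := by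
    intro w
    by_cases hw : w = s
    · subst hw
      rw [if_neg hs, Pi.single_eq_same, mul_one, sub_nonneg, le_div_iff₀ hD]
      nlinarith
    · rw [Pi.single_eq_of_ne hw, mul_zero, sub_zero]
      have : 0 ≤ (if w ∈ K then (0 : ℝ) else 1) := by split <;> norm_num
      have := hx w
      positivity
  have hcompl : ∑ w, (α * if w ∈ K then 0 else 1) * x w = α * ∑ w ∈ Kᶜ, x w := by
    rw [Finset.mul_sum, ← Finset.sum_compl_add_sum K,
      Finset.sum_eq_zero (s := K) fun w hw => by simp [hw], add_zero]
    exact Finset.sum_congr rfl fun w hw => by simp [Finset.mem_compl.mp hw]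
  simp_rw [abs_of_nonneg (hterm _), Finset.sum_sub_distrib, ← Finset.sum_div, ← Finset.mul_sum,
    hcompl, Finset.sum_pi_single', if_pos (Finset.mem_univ s)]
  ring

theorem stmt8_general {n : ℕ} (P : Matrix (Fin n) (Fin n) ℝ)
    (hP0 : ∀ i j, 0 ≤ P i j) (hP1 : ∀ i, ∑ j, P i j = 1)
    (α : ℝ) (hα0 : 0 < α) (hα1 : α < 1)
    (K : Finset (Fin n)) (s : Fin n) (hs : s ∉ K)
    (U : Fin n → ℝ) (hUdef : ∀ i, U i = if i ∈ K then 0 else 1)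
    (Pt : Matrix (Fin n) (Fin n) ℝ) (hPt : Pt = Matrix.of fun i j => U i * P i j)
    (eK : Fin n → ℝ) (heK : eK = fun i => if i ∈ K then 1 else 0)
    (π : Fin n → Fin n → ℝ)
    (πt : Fin n → ℝ)
    (hπt : πt = α • ((Pi.single s 1 : Fin n → ℝ) ᵥ*
      (1 - (1 - α) • (Pt + vecMulVec eK (Pi.single s 1)))⁻¹))
    (β : Fin n → ℝ)
    (hβ : ∀ k, β k = πt k / (α + (1 - α) * ∑ k' ∈ K, πt k'))
    (hubs : ∀ v, π s v =
      (α * U v * πt v + ∑ k ∈ K, πt k * π k v) / (α + (1 - α) * ∑ k ∈ K, πt k)) :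
    ∑ w : Fin n, |π s w - (α * (Pi.single s 1 : Fin n → ℝ) w + ∑ k ∈ K, β k * π k w)| =
      α * ((∑ w ∈ Kᶜ, πt w) / (α + (1 - α) * ∑ k ∈ K, πt k) - 1) := by
  obtain rfl : U = fun i => if i ∈ K then 0 else 1 := funext hUdef
  have hP : P ∈ rowStochastic ℝ (Fin n) := mem_rowStochastic_iff_sum.mpr ⟨hP0, hP1⟩
  have hRedirect : Pt + vecMulVec eK (Pi.single s 1) = redirectRows P K s := by
    ext i j
    by_cases hi : i ∈ K <;> simp [hPt, heK, redirectRows, vecMulVec_apply, hi]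
  have hR := redirectRows_mem_rowStochastic hP K s
  have hsingle : 0 ≤ (Pi.single s 1 : Fin n → ℝ) := Pi.single_nonneg.mpr zero_le_one
  replace hπt : πt = personalizedPageRank α (redirectRows P K s) (Pi.single s 1) := by
    rw [hπt, hRedirect, personalizedPageRank]
  have hπt0 : ∀ w, 0 ≤ πt w := hπt ▸ personalizedPageRank_nonneg hR hα0 hα1.le hsingle
  have hDs : α + (1 - α) * ∑ k ∈ K, πt k ≤ πt s := by
    simpa [hπt] using le_personalizedPageRank_apply hR hα0 hα1.le hsingle
      fun k hk => redirectRows_apply_of_mem P s hk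
  have hD : 0 < α + (1 - α) * ∑ k ∈ K, πt k :=
    add_pos_of_pos_of_nonneg hα0 (mul_nonneg (by linarith) (Finset.sum_nonneg fun k _ => hπt0 k))
  set D := α + (1 - α) * ∑ k ∈ K, πt k
  have herror : ∀ w, π s w - (α * (Pi.single s 1 : Fin n → ℝ) w + ∑ k ∈ K, β k * π k w) =
      α * (if w ∈ K then 0 else 1) * πt w / D - α * (Pi.single s 1 : Fin n → ℝ) w := by
    intro w
    simp_rw [hubs w, hβ, div_mul_eq_mul_div, ← Finset.sum_div]
    ring
  simp_rw [herror]
  exact sum_abs_hub_error hs hα0.le hD hπt0 hDs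

/-- Exact ℓ¹-error formula for the hub-based approximation of π_s. -/
theorem stmt8 {n : ℕ} (P : Matrix (Fin n) (Fin n) ℝ)
    (hP0 : ∀ i j, 0 ≤ P i j) (hP1 : ∀ i, ∑ j, P i j = 1)
    (α : ℝ) (hα0 : 0 < α) (hα1 : α < 1)
    (K : Finset (Fin n)) (s : Fin n) (hs : s ∉ K)
    (U : Fin n → ℝ) (hUdef : ∀ i, U i = if i ∈ K then 0 else 1)
    (Pt : Matrix (Fin n) (Fin n) ℝ) (hPt : Pt = Matrix.of fun i j => U i * P i j)
    (eK : Fin n → ℝ) (heK : eK = fun i => if i ∈ K then 1 else 0)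
    (π : Fin n → Fin n → ℝ)
    (hπ : ∀ v, π v = α • ((Pi.single v 1 : Fin n → ℝ) ᵥ* (1 - (1 - α) • P)⁻¹))
    (πt : Fin n → ℝ)
    (hπt : πt = α • ((Pi.single s 1 : Fin n → ℝ) ᵥ*
      (1 - (1 - α) • (Pt + vecMulVec eK (Pi.single s 1)))⁻¹))
    (β : Fin n → ℝ)
    (hβ : ∀ k, β k = πt k / (α + (1 - α) * ∑ k' ∈ K, πt k'))
    (hubs : ∀ v, π s v =
      (α * U v * πt v + ∑ k ∈ K, πt k * π k v) / (α + (1 - α) * ∑ k ∈ K, πt k)) :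
    ∑ w : Fin n, |π s w - (α * (Pi.single s 1 : Fin n → ℝ) w + ∑ k ∈ K, β k * π k w)| =
      α * ((∑ w ∈ Kᶜ, πt w) / (α + (1 - α) * ∑ k ∈ K, πt k) - 1) :=
  stmt8_general P hP0 hP1 α hα0 hα1 K s hs U hUdef Pt hPt eK heK π πt hπt β hβ hubs
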